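/- Let A be a directed animal in the lattice ZxN. Then the relation ≼ defined on A by: a ≼ b if and only if a ◁ b, or a and b are not comparable for ◁ and x(a) > x(b), is a total (linear) order on A: it is reflexive, antisymmetric, transitive, and any two elements of A are comparable for ≼. -/
import Mathlib


/-- A vertex of the lattice: an x-coordinate in ℤ and a height in ℕ. -/
abbrev Vertex := ℤ × ℕ

/-- Membership in the lattice ZxN = {(x,y) ∈ ℤ×ℕ : x+y even}. -/
def inLattice (v : Vertex) : Prop := Even (v.1 + (v.2 : ℤ))

/-- A directed animal: a nonempty subset of ZxN such that every vertex of positive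
height has at least one of its parents (x−1,y−1), (x+1,y−1) in the set. -/
def IsAnimal (A : Set Vertex) : Prop :=
  A.Nonempty ∧ (∀ v ∈ A, inLattice v) ∧
    ∀ v ∈ A, 0 < v.2 → ((v.1 - 1, v.2 - 1) ∈ A ∨ (v.1 + 1, v.2 - 1) ∈ A)

/-- One step of a chain witnessing the partial order ◁ inside `A`:
both endpoints in `A`, strictly increasing height, x-coordinates within distance 1. -/
def chainStep (A : Set Vertex) (u v : Vertex) : Prop :=
  u ∈ A ∧ v ∈ A ∧ u.2 < v.2 ∧ |v.1 - u.1| ≤ 1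

/-- The relation a ◁ b : there is a chain v₀ = a, …, vₙ = b (n ≥ 0) in `A` with
y(v_{i+1}) > y(v_i) and |x(v_{i+1}) − x(v_i)| ≤ 1. -/
def triLT (A : Set Vertex) (a b : Vertex) : Prop :=
  Relation.ReflTransGen (chainStep A) a b

/-- The relation a ≼ b : a ◁ b, or a and b are not comparable for ◁ and x(a) > x(b). -/
def preOrd (A : Set Vertex) (a b : Vertex) : Prop :=
  triLT A a b ∨ (¬ triLT A a b ∧ ¬ triLT A b a ∧ b.1 < a.1)

lemma triLT_height {A : Set Vertex} {a b : Vertex} (h : triLT A a b) :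
    a = b ∨ a.2 < b.2 := by
  induction h with
  | refl => exact Or.inl rfl
  | tail _ hstep ih =>
    right
    rcases ih with rfl | h'
    · exact hstep.2.2.1
    · exact h'.trans hstep.2.2.1

lemma triLT_step {A : Set Vertex} {u v : Vertex} (hu : u ∈ A) (hv : v ∈ A)
    (hy : u.2 < v.2) (hx : |v.1 - u.1| ≤ 1) : triLT A u v :=
  Relation.ReflTransGen.single ⟨hu, hv, hy, hx⟩

/-- Two vertices of `A` with the same x-coordinate are comparable for ◁. -/
lemma samex {A : Set Vertex} {u v : Vertex} (hu : u ∈ A) (hv : v ∈ A)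
    (hx : u.1 = v.1) : triLT A u v ∨ triLT A v u := by
  rcases lt_trichotomy u.2 v.2 with h | h | h
  · exact Or.inl (triLT_step hu hv h (by simp [hx]))
  · have : u = v := Prod.ext hx h
    exact Or.inl (this ▸ Relation.ReflTransGen.refl)
  · exact Or.inr (triLT_step hv hu h (by simp [hx]))

/-- Discrete intermediate value: along a chain from `a` to `b`, every x-coordinate
between `a.1` and `b.1` is attained by some chain vertex. -/
lemma ivt {A : Set Vertex} {a b : Vertex} (ha : a ∈ A) (h : triLT A a b) :
    ∀ m : ℤ, ((a.1 ≤ m ∧ m ≤ b.1) ∨ (b.1 ≤ m ∧ m ≤ a.1)) →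
      ∃ v, v ∈ A ∧ v.1 = m ∧ triLT A a v ∧ triLT A v b := by
  induction h with
  | refl =>
    intro m hm
    have : m = a.1 := by omega
    exact ⟨a, ha, this.symm, Relation.ReflTransGen.refl, Relation.ReflTransGen.refl⟩
  | @tail c b hac hstep ih =>
    intro m hm
    obtain ⟨hcA, hbA, hy, hx⟩ := hstep
    by_cases hc : (a.1 ≤ m ∧ m ≤ c.1) ∨ (c.1 ≤ m ∧ m ≤ a.1)
    · obtain ⟨v, hvA, hvm, h1, h2⟩ := ih m hc
      exact ⟨v, hvA, hvm, h1, h2.tail ⟨hcA, hbA, hy, hx⟩⟩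
    · have hm' : m = b.1 := by
        have := abs_le.mp hx
        omega
      exact ⟨b, hbA, hm'.symm, hac.tail ⟨hcA, hbA, hy, hx⟩, Relation.ReflTransGen.refl⟩

/-- If `a ◁ b` and `c ∈ A` has x-coordinate between those of `a` and `b`,
then `c` is comparable to `a` or to `b`. -/
lemma no_between {A : Set Vertex} {a b c : Vertex} (ha : a ∈ A) (hc : c ∈ A)
    (hab : triLT A a b)
    (hm : (a.1 ≤ c.1 ∧ c.1 ≤ b.1) ∨ (b.1 ≤ c.1 ∧ c.1 ≤ a.1)) :
    triLT A a c ∨ triLT A c b := by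
  obtain ⟨v, hvA, hvm, h1, h2⟩ := ivt ha hab c.1 hm
  rcases lt_trichotomy v.2 c.2 with h | h | h
  · exact Or.inl (h1.trans (triLT_step hvA hc h (by simp [hvm])))
  · have : v = c := Prod.ext hvm h
    exact Or.inl (this ▸ h1)
  · exact Or.inr ((triLT_step hc hvA h (by simp [hvm])).trans h2)

/-- Key "same side" lemma: if `a ◁ b` and `c` is ◁-incomparable with both `a` and `b`,
then `c` is on the same side of `a` and of `b`. -/
lemma sameSide {A : Set Vertex} {a b c : Vertex} (ha : a ∈ A) (hc : c ∈ A)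
    (hab : triLT A a b) (hac : ¬ triLT A a c) (hca : ¬ triLT A c a)
    (hbc : ¬ triLT A b c) (hcb : ¬ triLT A c b) :
    (c.1 < a.1 ↔ c.1 < b.1) := by
  have hxa : c.1 ≠ a.1 := fun h => (samex hc ha h).elim hca hac
  constructor
  · intro h
    by_contra h'
    have : b.1 ≤ c.1 ∧ c.1 ≤ a.1 := ⟨by omega, le_of_lt h⟩
    exact (no_between ha hc hab (Or.inr this)).elim hac hcb
  · intro h
    by_contra h'
    have : a.1 ≤ c.1 ∧ c.1 ≤ b.1 := ⟨by omega, le_of_lt h⟩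
    exact (no_between ha hc hab (Or.inl this)).elim hac hcb

/-- For any directed animal `A`, the relation ≼ is a total (linear)
order on `A`: reflexive, antisymmetric, transitive, and any two elements of `A`
are comparable. -/
theorem preOrd_isLinearOrder_on_animal (A : Set Vertex) (hA : IsAnimal A) :
    (∀ a ∈ A, preOrd A a a) ∧
    (∀ a ∈ A, ∀ b ∈ A, preOrd A a b → preOrd A b a → a = b) ∧
    (∀ a ∈ A, ∀ b ∈ A, ∀ c ∈ A, preOrd A a b → preOrd A b c → preOrd A a c) ∧
    (∀ a ∈ A, ∀ b ∈ A, preOrd A a b ∨ preOrd A b a) := by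
  refine ⟨?_, ?_, ?_, ?_⟩
  · intro a _
    exact Or.inl Relation.ReflTransGen.refl
  · intro a ha b hb h1 h2
    rcases h1 with h1 | ⟨h1a, h1b, h1x⟩
    · rcases h2 with h2 | ⟨h2a, h2b, h2x⟩
      · rcases triLT_height h1 with rfl | hy1
        · rfl
        · rcases triLT_height h2 with e | hy2
          · exact e.symm
          · omega
      · exact absurd h1 h2b
    · rcases h2 with h2 | ⟨h2a, h2b, h2x⟩
      · exact absurd h2 h1b
      · omega
  · intro a ha b hb c hc h1 h2
    rcases h1 with h1 | ⟨hab, hba, hxba⟩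
    · rcases h2 with h2 | ⟨hbc, hcb, hxcb⟩
      · exact Or.inl (h1.trans h2)
      · by_cases hac : triLT A a c
        · exact Or.inl hac
        have hca : ¬ triLT A c a := fun h => hcb (h.trans h1)
        exact Or.inr ⟨hac, hca, (sameSide ha hc h1 hac hca hbc hcb).mpr hxcb⟩
    · rcases h2 with h2 | ⟨hbc, hcb, hxcb⟩
      · by_cases hac : triLT A a c
        · exact Or.inl hac
        have hca : ¬ triLT A c a := fun h => hba (h2.trans h)
        have h3 := sameSide hb ha h2 hba hab hca hac
        have hne : c.1 ≠ a.1 := fun h => (samex hc ha h).elim hca hac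
        have h4 : ¬ a.1 < c.1 := fun hh => absurd (h3.mpr hh) (by omega)
        exact Or.inr ⟨hac, hca, by omega⟩
      · by_cases hac : triLT A a c
        · exact Or.inl hac
        have hca : ¬ triLT A c a := by
          intro h
          have := (sameSide hc hb h hcb hbc hab hba).mpr hxba
          omega
        exact Or.inr ⟨hac, hca, by omega⟩
  · intro a ha b hb
    by_cases h1 : triLT A a b
    · exact Or.inl (Or.inl h1)
    by_cases h2 : triLT A b a
    · exact Or.inr (Or.inl h2)
    have hne : a.1 ≠ b.1 := fun h => (samex ha hb h).elim h1 h2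
    rcases lt_or_gt_of_ne hne with h | h
    · exact Or.inr (Or.inr ⟨h2, h1, h⟩)
    · exact Or.inl (Or.inr ⟨h1, h2, h⟩)
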